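/- arXiv:1811.12031 — 3 statements merged into one kernel-verified Lean document; each statement's English description precedes it below -/
import Mathlib

section
/- For every integer n ≥ 4, the second largest distance Pareto eigenvalue of the graph S_n⁺ satisfies ρ₂(S_n⁺) = (2n − 7 + √((2n−1)² − 16))/2. -/
/-!
Vertex `0` of `S_n⁺` is adjacent to all others, so its distance matrix is `2 (J - I) - A`, and the
hub `0`, the triangle vertices `1, 2` and the `m = n - 3` pendant vertices form an equitable
partition with quotient matrix `[[0, 2, m], [1, 1, 2m], [1, 4, 2m - 2]]`. A Pareto eigenvector
satisfies `D x = λ x` on its support. If `λ > 2m + 1`, all non-hub entries of `x` are positive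
(a zero entry would bound `λ` by a row sum of `D` minus one entry, at most `2m + 1`), so twin
vertices carry equal entries and `x` is constant on the classes. Hence `λ` is a root of
`λ² - (2m - 1) λ - (6m + 2)` (zero hub entry) or of the characteristic cubic of the quotient
matrix. Conversely, the corresponding class vectors are Pareto eigenvectors. The cubic has exactly
one root `c` above `2m + 1`, and `c ≥ 2m + 2`, while the larger quadratic root lies in
`(2m + 1, 2m + 2)`; so the latter is the second largest element of `Π(S_n⁺)`.
-/

open Matrix SimpleGraph

/-- `x` is a (unit-normalizable) Pareto eigenvector of `A` associated with `lam`: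
`x` is nonzero, entrywise nonnegative, `A x ≥ lam • x` entrywise, and
`lam = xᵀAx / xᵀx`. -/
def IsParetoEigenpair {n : ℕ} (A : Matrix (Fin n) (Fin n) ℝ) (lam : ℝ) (x : Fin n → ℝ) : Prop :=
  x ≠ 0 ∧ (∀ i, 0 ≤ x i) ∧ (∀ i, lam * x i ≤ A.mulVec x i) ∧
    lam = (x ⬝ᵥ A.mulVec x) / (x ⬝ᵥ x)

/-- `lam` is a Pareto eigenvalue of `A`. -/
def IsParetoEigenvalue {n : ℕ} (A : Matrix (Fin n) (Fin n) ℝ) (lam : ℝ) : Prop :=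
  ∃ x, IsParetoEigenpair A lam x

/-- The distance matrix of a graph on `Fin n`, as a real matrix. -/
noncomputable def distMatrix {n : ℕ} (G : SimpleGraph (Fin n)) : Matrix (Fin n) (Fin n) ℝ :=
  fun i j => (G.dist i j : ℝ)

/-- The set `Π(G)` of distance Pareto eigenvalues of `G`. -/
def distParetoSet {n : ℕ} (G : SimpleGraph (Fin n)) : Set ℝ :=
  {lam | IsParetoEigenvalue (distMatrix G) lam}

/-- `a` is the `k`-th largest element of the (finite) set `S`. -/
def IsKthLargest (S : Set ℝ) (k : ℕ) (a : ℝ) : Prop :=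
  a ∈ S ∧ {x ∈ S | a < x}.ncard = k - 1

/-- `a` is the `k`-th smallest element of the (finite) set `S`. -/
def IsKthSmallest (S : Set ℝ) (k : ℕ) (a : ℝ) : Prop :=
  a ∈ S ∧ {x ∈ S | x < a}.ncard = k - 1

/-- The star graph `S_n` on `n` vertices: vertex `0` is adjacent to all others. -/
def starGraph (n : ℕ) : SimpleGraph (Fin n) where
  Adj i j := i ≠ j ∧ (i.val = 0 ∨ j.val = 0)
  symm := ⟨fun i j h => ⟨h.1.symm, h.2.symm⟩⟩
  loopless := ⟨fun i h => h.1 rfl⟩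

/-- The graph `S_n⁺`: the star `S_n` plus one edge between the pendant vertices `1` and `2`. -/
def starPlusGraph (n : ℕ) : SimpleGraph (Fin n) where
  Adj i j := i ≠ j ∧
    ((i.val = 0 ∨ j.val = 0) ∨ (i.val = 1 ∧ j.val = 2) ∨ (i.val = 2 ∧ j.val = 1))
  symm := ⟨fun i j h => ⟨h.1.symm, by tauto⟩⟩
  loopless := ⟨fun i h => h.1 rfl⟩

/-- The wheel graph `W_n` on `n` vertices: hub `0` joined to the cycle `1 - 2 - ⋯ - (n-1) - 1`. -/
def wheelGraph (n : ℕ) : SimpleGraph (Fin n) where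
  Adj i j := i ≠ j ∧ (i.val = 0 ∨ j.val = 0 ∨
    i.val + 1 = j.val ∨ j.val + 1 = i.val ∨
    (i.val = 1 ∧ j.val = n - 1) ∨ (j.val = 1 ∧ i.val = n - 1))
  symm := ⟨fun i j h => ⟨h.1.symm, by tauto⟩⟩
  loopless := ⟨fun i h => h.1 rfl⟩

/-- `K₄ - e`: the complete graph on 4 vertices minus the edge `{0,1}`. -/
def k4MinusE : SimpleGraph (Fin 4) where
  Adj i j := i ≠ j ∧ ¬((i.val = 0 ∧ j.val = 1) ∨ (i.val = 1 ∧ j.val = 0))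
  symm := ⟨fun i j h => ⟨h.1.symm, by tauto⟩⟩
  loopless := ⟨fun i h => h.1 rfl⟩

/-- `C₃ * C₃`: two triangles `{0,1,2}` and `{0,3,4}` glued at the common vertex `0`. -/
def c3c3Graph : SimpleGraph (Fin 5) where
  Adj i j := i ≠ j ∧ (i.val = 0 ∨ j.val = 0 ∨
    (i.val ≤ 2 ∧ j.val ≤ 2) ∨ (3 ≤ i.val ∧ 3 ≤ j.val))
  symm := ⟨fun i j h => ⟨h.1.symm, by tauto⟩⟩
  loopless := ⟨fun i h => h.1 rfl⟩


section Pareto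

variable {n : ℕ} {A : Matrix (Fin n) (Fin n) ℝ} {lam : ℝ} {x : Fin n → ℝ}

theorem dotProduct_self_pos_of_ne_zero (hx : x ≠ 0) : 0 < x ⬝ᵥ x :=
  lt_of_le_of_ne (Finset.sum_nonneg fun i _ => mul_self_nonneg (x i))
    (Ne.symm (dotProduct_self_eq_zero.not.mpr hx))

/-- Given `x ≥ 0` and `A x ≥ lam x`, the Rayleigh quotient equals `lam` iff the nonnegative terms
`x i ((A x) i - lam x i)` all vanish. -/
theorem isParetoEigenpair_iff_complementary :
    IsParetoEigenpair A lam x ↔ x ≠ 0 ∧ (∀ i, 0 ≤ x i) ∧ (∀ i, lam * x i ≤ (A *ᵥ x) i) ∧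
      ∀ i, x i ≠ 0 → (A *ᵥ x) i = lam * x i := by
  refine and_congr_right fun hx => and_congr_right fun hnn => and_congr_right fun hle => ?_
  have hpos := dotProduct_self_pos_of_ne_zero hx
  have hgap : ∀ i, 0 ≤ x i * ((A *ᵥ x) i - lam * x i) :=
    fun i => mul_nonneg (hnn i) (sub_nonneg.mpr (hle i))
  have hsum : ∑ i, x i * ((A *ᵥ x) i - lam * x i) = x ⬝ᵥ (A *ᵥ x) - lam * (x ⬝ᵥ x) := by
    simp only [mul_sub, Finset.sum_sub_distrib, mul_left_comm _ lam, ← Finset.mul_sum]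
    rfl
  rw [eq_div_iff hpos.ne', eq_comm, ← sub_eq_zero, ← hsum,
    Finset.sum_eq_zero_iff_of_nonneg fun i _ => hgap i]
  refine forall_congr' fun i => ?_
  simp only [Finset.mem_univ, true_implies, mul_eq_zero, sub_eq_zero, or_iff_not_imp_left]

theorem IsParetoEigenpair.mulVec_eq_of_ne_zero (h : IsParetoEigenpair A lam x) {i : Fin n}
    (hi : x i ≠ 0) : (A *ᵥ x) i = lam * x i :=
  (isParetoEigenpair_iff_complementary.mp h).2.2.2 i hi

/-- At a maximal entry `x i` of a Pareto eigenvector, `lam x i ≤ (A x) i` bounds `lam` by the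
row sum of `A` with the column of a vanishing entry `x k` removed. -/
theorem IsParetoEigenpair.exists_le_sum_sub_of_eq_zero (hA : ∀ i j, 0 ≤ A i j)
    (h : IsParetoEigenpair A lam x) {k : Fin n} (hk : x k = 0) :
    ∃ i ≠ k, lam ≤ (∑ j, A i j) - A i k := by
  obtain ⟨hx, hnn, hle, -⟩ := h
  obtain ⟨i, -, hmax⟩ := Finset.exists_max_image Finset.univ x ⟨k, Finset.mem_univ k⟩
  obtain ⟨j, hj⟩ := Function.ne_iff.mp hx
  have hxi : 0 < x i := ((hnn j).lt_of_ne' hj).trans_le (hmax j (Finset.mem_univ j))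
  refine ⟨i, fun hik => by simp [hik, hk] at hxi, le_of_mul_le_mul_right ?_ hxi⟩
  calc lam * x i ≤ ∑ j, A i j * x j := hle i
    _ = ∑ j ∈ Finset.univ.erase k, A i j * x j := by rw [Finset.sum_erase _ (by rw [hk, mul_zero])]
    _ ≤ ∑ j ∈ Finset.univ.erase k, A i j * x i :=
      Finset.sum_le_sum fun j _ => mul_le_mul_of_nonneg_left (hmax j (Finset.mem_univ j)) (hA i j)
    _ = ((∑ j, A i j) - A i k) * x i := by
      rw [Finset.sum_erase_eq_sub (Finset.mem_univ k), sub_mul, Finset.sum_mul]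

end Pareto

namespace SimpleGraph

variable {V : Type*} [DecidableEq V] {G : SimpleGraph V} [DecidableRel G.Adj] {v : V}

theorem dist_eq_of_forall_adj (hv : ∀ w, w ≠ v → G.Adj v w) (i j : V) :
    G.dist i j = if i = j then 0 else if G.Adj i j then 1 else 2 := by
  split_ifs with hij hadj
  · rw [hij, dist_self]
  · exact dist_eq_one_iff_adj.mpr hadj
  · have hiv : i ≠ v := by rintro rfl; exact hadj (hv j (Ne.symm hij))
    have hjv : j ≠ v := by rintro rfl; exact hadj (hv i hij).symm
    let w : G.Walk i j := (Walk.nil.cons (hv j hjv)).cons (hv i hiv).symm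
    have hle : G.dist i j ≤ 2 := dist_le w
    have h0 : G.dist i j ≠ 0 := fun h => hij ((Reachable.dist_eq_zero_iff ⟨w⟩).mp h)
    have h1 : G.dist i j ≠ 1 := fun h => hadj (dist_eq_one_iff_adj.mp h)
    omega

/-- With a universal vertex the distance is `2 - 2 [i = j] - [i ~ j]`, so the distance matrix
is `2 (J - I) - A(G)`. -/
theorem sum_dist_mul_of_forall_adj [Fintype V] (hv : ∀ w, w ≠ v → G.Adj v w) (x : V → ℝ)
    (i : V) : ∑ j, (G.dist i j : ℝ) * x j =
      2 * ∑ j, x j - 2 * x i - ∑ j, if G.Adj i j then x j else 0 := by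
  have hterm : ∀ j, (G.dist i j : ℝ) * x j =
      2 * x j - (if j = i then 2 * x j else 0) - (if G.Adj i j then x j else 0) := by
    intro j
    rw [dist_eq_of_forall_adj hv]
    by_cases hij : i = j
    · subst hij; simp
    · by_cases hadj : G.Adj i j <;> simp [hij, Ne.symm hij, hadj]
      ring
  simp only [hterm, Finset.sum_sub_distrib, Fintype.sum_ite_eq', Finset.mul_sum]

end SimpleGraph

section StarPlus

theorem starPlusGraph_adj {n : ℕ} {i j : Fin n} : (starPlusGraph n).Adj i j ↔ i.val ≠ j.val ∧
    (i.val = 0 ∨ j.val = 0 ∨ (i.val = 1 ∧ j.val = 2) ∨ (i.val = 2 ∧ j.val = 1)) := by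
  simp only [starPlusGraph, Ne, Fin.ext_iff, or_assoc]

instance (n : ℕ) : DecidableRel (starPlusGraph n).Adj :=
  fun _ _ => decidable_of_iff _ starPlusGraph_adj.symm

variable {m : ℕ}

theorem starPlusGraph_adj_zero {w : Fin (m + 3)} (hw : w ≠ 0) : (starPlusGraph (m + 3)).Adj 0 w :=
  ⟨hw.symm, Or.inl (Or.inl rfl)⟩

theorem distMatrix_starPlusGraph_mulVec (x : Fin (m + 3) → ℝ) (i : Fin (m + 3)) :
    (distMatrix (starPlusGraph (m + 3)) *ᵥ x) i =
      2 * ∑ j, x j - 2 * x i - ∑ j, if (starPlusGraph (m + 3)).Adj i j then x j else 0 :=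
  SimpleGraph.sum_dist_mul_of_forall_adj (fun _ => starPlusGraph_adj_zero) x i

theorem distMatrix_starPlusGraph_apply (i j : Fin (m + 3)) :
    distMatrix (starPlusGraph (m + 3)) i j =
      if i = j then 0 else if (starPlusGraph (m + 3)).Adj i j then 1 else 2 := by
  rw [distMatrix, SimpleGraph.dist_eq_of_forall_adj fun _ => starPlusGraph_adj_zero]
  split_ifs <;> norm_num

theorem distMatrix_starPlusGraph_mulVec_zero (x : Fin (m + 3) → ℝ) :
    (distMatrix (starPlusGraph (m + 3)) *ᵥ x) 0 = ∑ j, x j - x 0 := by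
  rw [distMatrix_starPlusGraph_mulVec]
  have : ∀ j, (if (starPlusGraph (m + 3)).Adj 0 j then x j else 0) =
      x j - if j = 0 then x j else 0 := by
    intro j
    by_cases hj : j = 0
    · simp [hj]
    · simp [starPlusGraph_adj_zero hj, hj]
  simp only [this, Finset.sum_sub_distrib, Fintype.sum_ite_eq']
  ring

theorem distMatrix_starPlusGraph_mulVec_of_triangle (x : Fin (m + 3) → ℝ) {i j : Fin (m + 3)}
    (hij : i.val = 1 ∧ j.val = 2 ∨ i.val = 2 ∧ j.val = 1) :
    (distMatrix (starPlusGraph (m + 3)) *ᵥ x) i = 2 * ∑ k, x k - 2 * x i - x 0 - x j := by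
  have hnbr : (∑ k, if (starPlusGraph (m + 3)).Adj i k then x k else 0) = x 0 + x j := by
    rw [Fintype.sum_eq_add 0 j]
    · rw [if_pos (starPlusGraph_adj_zero (Fin.ne_of_val_ne (by rw [Fin.val_zero]; omega))).symm,
        if_pos (starPlusGraph_adj.mpr (by omega))]
    · simp only [ne_eq, Fin.ext_iff, Fin.val_zero]; omega
    · intro k hk
      simp only [ne_eq, Fin.ext_iff, Fin.val_zero] at hk
      rw [if_neg (starPlusGraph_adj.not.mpr (by omega))]
  rw [distMatrix_starPlusGraph_mulVec, hnbr]
  ring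

theorem distMatrix_starPlusGraph_mulVec_of_three_le (x : Fin (m + 3) → ℝ) {i : Fin (m + 3)}
    (hi : 3 ≤ i.val) :
    (distMatrix (starPlusGraph (m + 3)) *ᵥ x) i = 2 * ∑ k, x k - 2 * x i - x 0 := by
  have hnbr : (∑ k, if (starPlusGraph (m + 3)).Adj i k then x k else 0) = x 0 := by
    rw [Fintype.sum_eq_single 0]
    · rw [if_pos (starPlusGraph_adj_zero (Fin.ne_of_val_ne (by rw [Fin.val_zero]; omega))).symm]
    · intro k hk
      simp only [ne_eq, Fin.ext_iff, Fin.val_zero] at hk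
      rw [if_neg (starPlusGraph_adj.not.mpr (by omega))]
  rw [distMatrix_starPlusGraph_mulVec, hnbr]

end StarPlus

section StarPlusVec

variable {m : ℕ}

def starPlusVec (m : ℕ) (s t u : ℝ) : Fin (m + 3) → ℝ :=
  fun i => if i.val = 0 then s else if i.val ≤ 2 then t else u

theorem starPlusVec_zero (s t u : ℝ) : starPlusVec m s t u 0 = s := rfl

theorem starPlusVec_of_val_eq_zero (s t u : ℝ) {i : Fin (m + 3)} (hi : i.val = 0) :
    starPlusVec m s t u i = s := if_pos hi

theorem starPlusVec_of_triangle (s t u : ℝ) {i : Fin (m + 3)} (hi1 : 1 ≤ i.val) (hi2 : i.val ≤ 2) :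
    starPlusVec m s t u i = t := by
  rw [starPlusVec, if_neg (by omega), if_pos hi2]

theorem starPlusVec_of_three_le (s t u : ℝ) {i : Fin (m + 3)} (hi : 3 ≤ i.val) :
    starPlusVec m s t u i = u := by
  rw [starPlusVec, if_neg (by omega), if_neg (by omega)]

theorem starPlusVec_rec {P : ℝ → ℝ → Prop} {s t u s' t' u' : ℝ} (hs : P s s') (ht : P t t')
    (hu : P u u') (i : Fin (m + 3)) : P (starPlusVec m s t u i) (starPlusVec m s' t' u' i) := by
  unfold starPlusVec
  split_ifs <;> assumption

theorem sum_starPlusVec (s t u : ℝ) : ∑ i, starPlusVec m s t u i = s + 2 * t + m * u := by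
  simp only [starPlusVec, Fin.val_eq_zero_iff, Fin.sum_univ_succ, ↓reduceIte, Fin.succ_ne_zero,
    Fin.val_succ, Order.add_one_le_iff, Order.lt_two_iff, Fin.coe_ofNat_eq_mod, Nat.zero_mod,
    zero_le, add_le_iff_nonpos_left, nonpos_iff_eq_zero, Finset.sum_const, Finset.card_univ,
    Fintype.card_fin, nsmul_eq_mul]
  ring

theorem distMatrix_starPlusGraph_mulVec_starPlusVec (s t u : ℝ) :
    distMatrix (starPlusGraph (m + 3)) *ᵥ starPlusVec m s t u =
      starPlusVec m (2 * t + m * u) (s + t + 2 * m * u) (s + 4 * t + (2 * m - 2) * u) := by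
  funext i
  have hS := sum_starPlusVec (m := m) s t u
  rcases Nat.lt_or_ge i.val 3 with hi | hi
  · interval_cases hi0 : i.val
    · rw [starPlusVec_of_val_eq_zero _ _ _ hi0, show i = 0 from Fin.ext hi0,
        distMatrix_starPlusGraph_mulVec_zero, hS, starPlusVec_zero]
      ring
    all_goals
      obtain ⟨j, hij⟩ : ∃ j : Fin (m + 3), i.val = 1 ∧ j.val = 2 ∨ i.val = 2 ∧ j.val = 1 :=
        ⟨⟨3 - i.val, by omega⟩, by simp only; omega⟩
      rw [distMatrix_starPlusGraph_mulVec_of_triangle _ hij, hS, starPlusVec_zero,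
        starPlusVec_of_triangle _ _ _ (i := i) (by omega) (by omega),
        starPlusVec_of_triangle _ _ _ (i := j) (by omega) (by omega),
        starPlusVec_of_triangle _ _ _ (i := i) (by omega) (by omega)]
      ring
  · rw [distMatrix_starPlusGraph_mulVec_of_three_le _ hi, hS, starPlusVec_zero,
      starPlusVec_of_three_le _ _ _ hi, starPlusVec_of_three_le _ _ _ hi]
    ring

end StarPlusVec

section StarPlusPareto

variable {m : ℕ} {lam : ℝ}

theorem isParetoEigenvalue_starPlusGraph_of_quotient {s t u : ℝ} (hs : 0 ≤ s) (ht : 0 < t)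
    (hu : 0 ≤ u) (h0 : lam * s ≤ 2 * t + m * u) (h0' : s ≠ 0 → 2 * t + m * u = lam * s)
    (h1 : s + t + 2 * m * u = lam * t) (h3 : s + 4 * t + (2 * m - 2) * u = lam * u) :
    IsParetoEigenvalue (distMatrix (starPlusGraph (m + 3))) lam := by
  refine ⟨starPlusVec m s t u, isParetoEigenpair_iff_complementary.mpr ⟨?_, ?_, ?_, ?_⟩⟩
  · refine Function.ne_iff.mpr ⟨1, ?_⟩
    rw [starPlusVec_of_triangle _ _ _ (by simp) (by simp)]
    exact ht.ne'
  · intro i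
    unfold starPlusVec
    split_ifs
    exacts [hs, ht.le, hu]
  · intro i
    rw [distMatrix_starPlusGraph_mulVec_starPlusVec]
    exact starPlusVec_rec (P := fun a b => lam * a ≤ b) h0 h1.ge h3.ge i
  · intro i
    rw [distMatrix_starPlusGraph_mulVec_starPlusVec]
    exact starPlusVec_rec (P := fun a b => a ≠ 0 → b = lam * a) h0' (fun _ => h1) (fun _ => h3) i

theorem sum_distMatrix_starPlusGraph (i : Fin (m + 3)) :
    ∑ j, distMatrix (starPlusGraph (m + 3)) i j =
      starPlusVec m (m + 2) (2 * m + 2) (2 * m + 3) i := by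
  have h := congrFun (distMatrix_starPlusGraph_mulVec_starPlusVec (m := m) 1 1 1) i
  have h1 : starPlusVec m 1 1 1 = 1 := by
    funext j
    simp [starPlusVec]
  simp only [h1, mulVec, dotProduct, Pi.one_apply, mul_one] at h
  rw [h]
  congr 1 <;> ring

theorem sum_distMatrix_starPlusGraph_sub_le {i k : Fin (m + 3)} (hik : i ≠ k) (hk : 1 ≤ k.val) :
    (∑ j, distMatrix (starPlusGraph (m + 3)) i j) - distMatrix (starPlusGraph (m + 3)) i k ≤
      2 * m + 1 := by
  rw [sum_distMatrix_starPlusGraph, distMatrix_starPlusGraph_apply, if_neg hik]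
  have hm : (0 : ℝ) ≤ m := m.cast_nonneg
  rcases Nat.lt_or_ge i.val 3 with hi | hi
  · rcases Nat.eq_zero_or_pos i.val with hi0 | hi0
    · rw [starPlusVec_of_val_eq_zero _ _ _ hi0]
      split_ifs <;> linarith
    · rw [starPlusVec_of_triangle _ _ _ hi0 (by omega)]
      split_ifs <;> linarith
  · rw [starPlusVec_of_three_le _ _ _ hi, if_neg (starPlusGraph_adj.not.mpr (by omega))]
    linarith

namespace IsParetoEigenpair

variable {x : Fin (m + 3) → ℝ}

theorem pos_of_starPlusGraph (h : IsParetoEigenpair (distMatrix (starPlusGraph (m + 3))) lam x)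
    (hlam : 2 * m + 1 < lam) {k : Fin (m + 3)} (hk : 1 ≤ k.val) : 0 < x k := by
  refine (h.2.1 k).lt_of_ne' fun hxk => ?_
  obtain ⟨i, hik, hle⟩ := h.exists_le_sum_sub_of_eq_zero (fun _ _ => Nat.cast_nonneg _) hxk
  exact (hle.trans (sum_distMatrix_starPlusGraph_sub_le hik hk)).not_gt hlam

/-- Twin vertices (`1, 2`, or two pendants) carry equal entries wherever the eigen-equation holds
at both, since the difference of their rows is `d(p, q) (x q - x p)`. -/
theorem eq_starPlusVec (h : IsParetoEigenpair (distMatrix (starPlusGraph (m + 3))) lam x)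
    (hlam : 0 ≤ lam) (hpos : ∀ k : Fin (m + 3), 1 ≤ k.val → 0 < x k) {p : Fin (m + 3)}
    (hp : 3 ≤ p.val) : x = starPlusVec m (x 0) (x 1) (x p) := by
  have heig : ∀ k : Fin (m + 3), 1 ≤ k.val → (distMatrix (starPlusGraph (m + 3)) *ᵥ x) k =
      lam * x k := fun k hk => h.mulVec_eq_of_ne_zero (hpos k hk).ne'
  have h21 : x 2 = x 1 := by
    have e1 := distMatrix_starPlusGraph_mulVec_of_triangle x (i := 1) (j := 2) (by simp)
    have e2 := distMatrix_starPlusGraph_mulVec_of_triangle x (i := 2) (j := 1) (by simp)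
    rw [heig 1 (by simp)] at e1
    rw [heig 2 (by rw [Fin.val_two]; omega)] at e2
    have : (lam + 1) * (x 2 - x 1) = 0 := by linear_combination e2 - e1
    linarith [(mul_eq_zero.mp this).resolve_left (by linarith)]
  have hpend : ∀ k : Fin (m + 3), 3 ≤ k.val → x k = x p := by
    intro k hk
    have ek := distMatrix_starPlusGraph_mulVec_of_three_le x hk
    have ep := distMatrix_starPlusGraph_mulVec_of_three_le x hp
    rw [heig k (by omega)] at ek
    rw [heig p (by omega)] at ep
    have : (lam + 2) * (x k - x p) = 0 := by linear_combination ek - ep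
    linarith [(mul_eq_zero.mp this).resolve_left (by linarith)]
  funext k
  rcases Nat.lt_or_ge k.val 3 with hk | hk
  · interval_cases hk' : k.val
    · rw [starPlusVec_of_val_eq_zero _ _ _ hk', show k = 0 from Fin.ext hk']
    · rw [starPlusVec_of_triangle _ _ _ (by omega) (by omega), show k = 1 from Fin.ext hk']
    · rw [starPlusVec_of_triangle _ _ _ (by omega) (by omega), show k = 2 from Fin.ext hk', h21]
  · rw [starPlusVec_of_three_le _ _ _ hk, hpend k hk]

end IsParetoEigenpair

/-- The quadratic is the characteristic polynomial of the triangle–pendant block of the quotient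
matrix (zero hub entry), the cubic that of the whole quotient matrix. -/
theorem IsParetoEigenvalue.starPlusGraph_quotient_root (hm : 1 ≤ m)
    (h : IsParetoEigenvalue (distMatrix (starPlusGraph (m + 3))) lam) (hlam : 2 * m + 1 < lam) :
    lam ^ 2 - (2 * m - 1) * lam - (6 * m + 2) = 0 ∨
      lam ^ 3 - (2 * m - 1) * lam ^ 2 - (7 * m + 4) * lam - (3 * m + 4) = 0 := by
  obtain ⟨x, hx⟩ := h
  have hpos : ∀ k : Fin (m + 3), 1 ≤ k.val → 0 < x k := fun k hk => hx.pos_of_starPlusGraph hlam hk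
  let p : Fin (m + 3) := ⟨3, by omega⟩
  have hp : 3 ≤ p.val := le_rfl
  have hxeq := hx.eq_starPlusVec (by linarith [(m.cast_nonneg : (0 : ℝ) ≤ m)]) hpos hp
  have hD := distMatrix_starPlusGraph_mulVec_starPlusVec (m := m) (x 0) (x 1) (x p)
  have heig : ∀ k, x k ≠ 0 → starPlusVec m (2 * x 1 + m * x p) (x 0 + x 1 + 2 * m * x p)
      (x 0 + 4 * x 1 + (2 * m - 2) * x p) k = lam * x k := by
    intro k hk
    rw [← hD, ← hxeq]
    exact hx.mulVec_eq_of_ne_zero hk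
  have e1 := heig 1 (hpos 1 (by simp)).ne'
  have e3 := heig p (hpos p (by omega)).ne'
  rw [starPlusVec_of_triangle _ _ _ (by simp) (by simp)] at e1
  rw [starPlusVec_of_three_le _ _ _ hp] at e3
  have hu : x p ≠ 0 := (hpos p (by omega)).ne'
  by_cases hs : x 0 = 0
  · left
    have : (lam ^ 2 - (2 * m - 1) * lam - (6 * m + 2)) * x p = 0 := by
      linear_combination (lam + 3) * hs - (lam - 1) * e3 - 4 * e1
    exact (mul_eq_zero.mp this).resolve_right hu
  · right
    have e0 := heig 0 hs
    rw [starPlusVec_zero] at e0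
    have : (lam ^ 3 - (2 * m - 1) * lam ^ 2 - (7 * m + 4) * lam - (3 * m + 4)) * x p = 0 := by
      linear_combination -(lam + 3) * e0 - (4 * lam + 2) * e1 - (lam ^ 2 - lam - 2) * e3
    exact (mul_eq_zero.mp this).resolve_right hu

theorem isParetoEigenvalue_starPlusGraph_of_quadratic (hm : 1 ≤ m) (hlam : 1 ≤ lam)
    (h : lam ^ 2 - (2 * m - 1) * lam - (6 * m + 2) = 0) :
    IsParetoEigenvalue (distMatrix (starPlusGraph (m + 3))) lam := by
  have hm' : (0 : ℝ) < m := by exact_mod_cast hm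
  -- an eigenvector of the triangle–pendant block of the quotient matrix, extended by `0`
  refine isParetoEigenvalue_starPlusGraph_of_quotient (s := 0) (t := 2 * m) (u := lam - 1)
    le_rfl (by positivity) (by linarith) (by nlinarith) (absurd rfl) (by ring) ?_
  linear_combination -h

theorem isParetoEigenvalue_starPlusGraph_of_cubic (hlam : 0 < lam)
    (h : lam ^ 3 - (2 * m - 1) * lam ^ 2 - (7 * m + 4) * lam - (3 * m + 4) = 0) :
    IsParetoEigenvalue (distMatrix (starPlusGraph (m + 3))) lam := by
  -- an eigenvector of the quotient matrix
  refine isParetoEigenvalue_starPlusGraph_of_quotient (s := 2 * (lam + 2) + m * (lam + 3))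
    (t := lam * (lam + 2)) (u := lam * (lam + 3)) (by positivity) (by positivity) (by positivity)
    (le_of_eq (by ring)) (fun _ => by ring) ?_ ?_
  · linear_combination -h
  · linear_combination -h

end StarPlusPareto

section Roots

variable {m : ℝ}

noncomputable def starPlusQuadRoot (m : ℝ) : ℝ := (2 * m - 1 + √((2 * m + 5) ^ 2 - 16)) / 2

theorem quadratic_eq_zero_iff_starPlus (hm : 0 ≤ m) (z : ℝ) :
    z ^ 2 - (2 * m - 1) * z - (6 * m + 2) = 0 ↔
      z = starPlusQuadRoot m ∨ z = (2 * m - 1 - √((2 * m + 5) ^ 2 - 16)) / 2 := by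
  have hd : discrim 1 (-(2 * m - 1)) (-(6 * m + 2)) =
      √((2 * m + 5) ^ 2 - 16) * √((2 * m + 5) ^ 2 - 16) := by
    rw [Real.mul_self_sqrt (by nlinarith), discrim]
    ring
  rw [starPlusQuadRoot, show z ^ 2 - (2 * m - 1) * z - (6 * m + 2) =
    1 * (z * z) + -(2 * m - 1) * z + -(6 * m + 2) by ring, quadratic_eq_zero_iff one_ne_zero hd z,
    neg_neg, mul_one]

theorem starPlusQuadRoot_sq (hm : 0 ≤ m) :
    starPlusQuadRoot m ^ 2 - (2 * m - 1) * starPlusQuadRoot m - (6 * m + 2) = 0 :=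
  (quadratic_eq_zero_iff_starPlus hm _).mpr (Or.inl rfl)

theorem lt_starPlusQuadRoot (hm : 0 < m) : 2 * m + 1 < starPlusQuadRoot m := by
  have : 2 * m + 3 < √((2 * m + 5) ^ 2 - 16) :=
    Real.lt_sqrt_of_sq_lt (by nlinarith)
  rw [starPlusQuadRoot]
  linarith

theorem starPlusQuadRoot_lt (hm : 0 ≤ m) : starPlusQuadRoot m < 2 * m + 2 := by
  have : √((2 * m + 5) ^ 2 - 16) < 2 * m + 5 :=
    (Real.sqrt_lt' (by linarith)).mpr (by linarith)
  rw [starPlusQuadRoot]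
  linarith

theorem exists_cubic_root_starPlus (hm : 0 ≤ m) : ∃ c, 2 * m + 2 ≤ c ∧
    c ^ 3 - (2 * m - 1) * c ^ 2 - (7 * m + 4) * c - (3 * m + 4) = 0 := by
  have hcont : ContinuousOn
      (fun z : ℝ => z ^ 3 - (2 * m - 1) * z ^ 2 - (7 * m + 4) * z - (3 * m + 4))
      (Set.Icc (2 * m + 2) (2 * m + 3)) := by fun_prop
  obtain ⟨c, hc, hc0⟩ := intermediate_value_Icc (by linarith) hcont
    (show (0 : ℝ) ∈ Set.Icc _ _ from ⟨by nlinarith, by nlinarith⟩)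
  exact ⟨c, hc.1, hc0⟩

/-- Above `2m + 1` the cubic is the product of `z - c` and a positive quadratic in `z` and `c`. -/
theorem cubic_root_starPlus_unique (hm : 0 ≤ m) {z c : ℝ} (hz : 2 * m + 1 < z) (hc : 2 * m + 1 < c)
    (hz0 : z ^ 3 - (2 * m - 1) * z ^ 2 - (7 * m + 4) * z - (3 * m + 4) = 0)
    (hc0 : c ^ 3 - (2 * m - 1) * c ^ 2 - (7 * m + 4) * c - (3 * m + 4) = 0) : z = c := by
  have hfac : (z - c) * (z ^ 2 + z * c + c ^ 2 - (2 * m - 1) * (z + c) - (7 * m + 4)) = 0 := by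
    linear_combination hz0 - hc0
  have hpos : 0 < z ^ 2 + z * c + c ^ 2 - (2 * m - 1) * (z + c) - (7 * m + 4) := by
    nlinarith [mul_pos (sub_pos.mpr hz) (sub_pos.mpr hc)]
  linarith [(mul_eq_zero.mp hfac).resolve_right hpos.ne']

end Roots

theorem stmt0 (n : ℕ) (hn : 4 ≤ n) :
    IsKthLargest (distParetoSet (starPlusGraph n)) 2
      ((2 * (n : ℝ) - 7 + Real.sqrt ((2 * (n : ℝ) - 1) ^ 2 - 16)) / 2) := by
  obtain ⟨m, rfl⟩ : ∃ m, n = m + 3 := ⟨n - 3, by omega⟩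
  have hm : (0 : ℝ) < m := by exact_mod_cast (by omega : 0 < m)
  have ha : (2 * ((m + 3 : ℕ) : ℝ) - 7 + √((2 * ((m + 3 : ℕ) : ℝ) - 1) ^ 2 - 16)) / 2 =
      starPlusQuadRoot m := by
    rw [starPlusQuadRoot]
    push_cast
    ring_nf
  rw [ha]
  obtain ⟨c, hc, hc0⟩ := exists_cubic_root_starPlus hm.le
  have ha1 := lt_starPlusQuadRoot hm
  have hac := (starPlusQuadRoot_lt hm.le).trans_le hc
  refine ⟨isParetoEigenvalue_starPlusGraph_of_quadratic (by omega) (by linarith)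
    (starPlusQuadRoot_sq hm.le), ?_⟩
  suffices {z ∈ distParetoSet (starPlusGraph (m + 3)) | starPlusQuadRoot m < z} = {c} by
    rw [this, Set.ncard_singleton]
  ext z
  refine ⟨fun ⟨hz, haz⟩ => ?_, fun hz => ?_⟩
  · rcases hz.starPlusGraph_quotient_root (by omega) (ha1.trans haz) with hq | hp
    · rcases (quadratic_eq_zero_iff_starPlus hm.le z).mp hq with rfl | rfl
      · exact absurd haz (lt_irrefl _)
      · rw [starPlusQuadRoot] at haz
        linarith [Real.sqrt_nonneg ((2 * (m : ℝ) + 5) ^ 2 - 16)]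
    · exact cubic_root_starPlus_unique hm.le (ha1.trans haz) (ha1.trans hac) hp hc0
  · rw [Set.mem_singleton_iff.mp hz]
    exact ⟨isParetoEigenvalue_starPlusGraph_of_cubic (by linarith) hc0, hac⟩
end

section
/- For every integer n ≥ 2, the largest two distance Pareto eigenvalues of the star S_n satisfy ρ₁(S_n) − ρ₂(S_n) = √(n² − 3n + 3) − n + 2. -/
open Matrix SimpleGraph

/-!
If `x` is a Pareto eigenvector of `A` for `μ`, then `xᵀ(Ax - μx) = 0` is a sum of nonnegative
terms, so `(Ax)ᵢ = μxᵢ` on the support of `x`: `μ` is an eigenvalue of the principal submatrix of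
`A` on that support, and there are finitely many Pareto eigenvalues.

For the star with `m` leaves, let `k` leaves lie in the support. If the centre does not, the
leaf equations force `μ = 2k - 2`; otherwise the centre equation `μ x₀ = ∑ xⱼ` turns them into
`μ² = 2(k - 1)μ + k`. Above `2m - 2` only the case `k = m` survives, whose positive root is the
Perron root `m - 1 + √(m² - m + 1)`. Both it and `2m - 2` (the indicator of the leaves) are
attained, so `ρ₁ - ρ₂ = √(m² - m + 1) - m + 1`, which is the claim for `n = m + 1`.
-/

section Pareto

variable {n : ℕ} {A : Matrix (Fin n) (Fin n) ℝ} {μ : ℝ} {x : Fin n → ℝ}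

theorem IsParetoEigenpair.mulVec_eq (h : IsParetoEigenpair A μ x) {i : Fin n} (hi : x i ≠ 0) :
    (A *ᵥ x) i = μ * x i := by
  obtain ⟨hx0, hnn, hle, hμ⟩ := h
  have hsum : ∑ k, x k * ((A *ᵥ x) k - μ * x k) = 0 := by
    rw [eq_div_iff (mt dotProduct_self_eq_zero.1 hx0)] at hμ
    simp only [mul_sub, Finset.sum_sub_distrib, dotProduct] at hμ ⊢
    rw [← hμ, Finset.mul_sum]
    ring_nf
  have := (Finset.sum_eq_zero_iff_of_nonneg fun k _ =>
    mul_nonneg (hnn k) (sub_nonneg.2 (hle k))).1 hsum i (Finset.mem_univ i)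
  linarith [(mul_eq_zero.1 this).resolve_left hi]

theorem isParetoEigenpair_of_mulVec_eq (hx0 : x ≠ 0) (hnn : ∀ i, 0 ≤ x i)
    (hle : ∀ i, μ * x i ≤ (A *ᵥ x) i) (heq : ∀ i, x i ≠ 0 → (A *ᵥ x) i = μ * x i) :
    IsParetoEigenpair A μ x := by
  refine ⟨hx0, hnn, hle, ?_⟩
  rw [eq_div_iff (mt dotProduct_self_eq_zero.1 hx0), dotProduct, dotProduct, Finset.mul_sum]
  refine Finset.sum_congr rfl fun i _ => ?_
  by_cases hi : x i = 0
  · simp [hi]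
  · rw [heq i hi]; ring

theorem IsParetoEigenpair.hasEigenvalue_submatrix (h : IsParetoEigenpair A μ x) :
    Module.End.HasEigenvalue
      (toLin' (A.submatrix (Subtype.val (p := (· ∈ ({i | x i ≠ 0} : Finset (Fin n))))) Subtype.val))
      μ := by
  refine Module.End.hasEigenvalue_of_hasEigenvector (x := fun i => x i)
    ⟨Module.End.mem_eigenspace_iff.2 ?_, ?_⟩
  · ext ⟨i, hi⟩
    rw [Finset.mem_filter] at hi
    rw [toLin'_apply, Pi.smul_apply, smul_eq_mul, ← h.mulVec_eq hi.2]
    simp only [mulVec, dotProduct, submatrix_apply]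
    rw [← Finset.sum_subtype _ (fun _ => Iff.rfl) (fun j => A i j * x j),
      Finset.sum_filter_of_ne fun j _ hj => right_ne_zero_of_mul hj]
  · obtain ⟨i, hi⟩ := Function.ne_iff.mp h.1
    exact Function.ne_iff.2 ⟨⟨i, by simpa using hi⟩, hi⟩

theorem finite_setOf_isParetoEigenvalue (A : Matrix (Fin n) (Fin n) ℝ) :
    {μ | IsParetoEigenvalue A μ}.Finite := by
  refine (Set.finite_iUnion fun s : Finset (Fin n) => Module.End.finite_hasEigenvalue
    (toLin' (A.submatrix (Subtype.val (p := (· ∈ s))) Subtype.val))).subset ?_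
  rintro μ ⟨x, hx⟩
  exact Set.mem_iUnion.2 ⟨_, hx.hasEigenvalue_submatrix⟩

end Pareto

section KthLargest

variable {S : Set ℝ}

theorem IsKthLargest.unique (hS : S.Finite) {k : ℕ} {a b : ℝ} (ha : IsKthLargest S k a)
    (hb : IsKthLargest S k b) : a = b := by
  suffices key : ∀ {a b}, IsKthLargest S k a → IsKthLargest S k b → ¬a < b by
    exact le_antisymm (not_lt.1 (key hb ha)) (not_lt.1 (key ha hb))
  intro a b ha hb hab
  have hsub : insert b {x ∈ S | b < x} ⊆ {x ∈ S | a < x} := by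
    rintro x (rfl | ⟨hx, hbx⟩)
    exacts [⟨hb.1, hab⟩, ⟨hx, hab.trans hbx⟩]
  have := Set.ncard_le_ncard hsub (hS.subset (Set.sep_subset _ _))
  rw [Set.ncard_insert_of_notMem (fun h => lt_irrefl b h.2) (hS.subset (Set.sep_subset _ _)),
    ha.2, hb.2] at this
  omega

theorem isKthLargest_one_two_of_le_or_eq {a b : ℝ} (ha : a ∈ S) (hb : b ∈ S) (hba : b < a)
    (hS : ∀ x ∈ S, x ≤ b ∨ x = a) : IsKthLargest S 1 a ∧ IsKthLargest S 2 b := by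
  have h1 : {x ∈ S | a < x} = ∅ := by
    refine Set.eq_empty_of_forall_notMem fun x ⟨hx, hax⟩ => ?_
    rcases hS x hx with h | rfl <;> linarith
  have h2 : {x ∈ S | b < x} = {a} := by
    refine Set.eq_singleton_iff_unique_mem.2 ⟨⟨ha, hba⟩, fun x ⟨hx, hbx⟩ => ?_⟩
    exact (hS x hx).resolve_left (not_le.2 hbx)
  exact ⟨⟨ha, by simp [h1]⟩, ⟨hb, by simp [h2]⟩⟩

end KthLargest

theorem distMatrix_starGraph_apply {n : ℕ} [NeZero n] (i j : Fin n) :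
    distMatrix (starGraph n) i j = if i = j then 0 else if i = 0 ∨ j = 0 then 1 else 2 := by
  set G := _root_.starGraph n
  have adj_iff : ∀ {i j : Fin n}, G.Adj i j ↔ i ≠ j ∧ (i = 0 ∨ j = 0) :=
    fun {_ _} => and_congr_right' (or_congr Fin.val_eq_zero_iff Fin.val_eq_zero_iff)
  suffices G.dist i j = if i = j then 0 else if i = 0 ∨ j = 0 then 1 else 2 by
    simp only [distMatrix, this]; split_ifs <;> norm_num
  split_ifs with hij hij0
  · exact hij ▸ SimpleGraph.dist_self
  · exact SimpleGraph.dist_eq_one_iff_adj.2 (adj_iff.2 ⟨hij, hij0⟩)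
  · rw [not_or] at hij0
    have hi0 : G.Adj i 0 := adj_iff.2 ⟨hij0.1, Or.inr rfl⟩
    have h0j : G.Adj 0 j := adj_iff.2 ⟨Ne.symm hij0.2, Or.inl rfl⟩
    have hle : G.dist i j ≤ 2 := by
      simpa using SimpleGraph.dist_le (hi0.toWalk.append h0j.toWalk)
    have hne0 : G.dist i j ≠ 0 :=
      fun h => hij ((hi0.reachable.trans h0j.reachable).dist_eq_zero_iff.1 h)
    have hne1 : G.dist i j ≠ 1 :=
      fun h => by simpa [hij0.1, hij0.2] using adj_iff.1 (SimpleGraph.dist_eq_one_iff_adj.1 h)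
    omega

section Star

variable {m : ℕ}

theorem distMatrix_starGraph_mulVec_zero (x : Fin (m + 1) → ℝ) :
    (distMatrix (starGraph (m + 1)) *ᵥ x) 0 = ∑ j : Fin m, x j.succ := by
  simp [mulVec, dotProduct, distMatrix_starGraph_apply, Fin.sum_univ_succ,
    fun k : Fin m => (Fin.succ_ne_zero k).symm]

theorem distMatrix_starGraph_mulVec_succ (x : Fin (m + 1) → ℝ) (p : Fin m) :
    (distMatrix (starGraph (m + 1)) *ᵥ x) p.succ =
      x 0 + 2 * ∑ j : Fin m, x j.succ - 2 * x p.succ := by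
  have hsplit : ∀ j : Fin m, (if p = j then 0 else 2 * x j.succ) =
      2 * x j.succ - if p = j then 2 * x p.succ else 0 := by
    intro j; split_ifs with h <;> simp [h]
  simp [mulVec, dotProduct, distMatrix_starGraph_apply, Fin.sum_univ_succ, Fin.succ_ne_zero,
    hsplit, Finset.sum_sub_distrib, Finset.mul_sum, add_sub_assoc]

theorem starGraph_paretoEigenvalue_cases {μ : ℝ} (h : μ ∈ distParetoSet (starGraph (m + 1))) :
    ∃ k ≤ m, μ = 2 * k - 2 ∨ μ ^ 2 = 2 * (k - 1) * μ + k := by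
  obtain ⟨x, hx⟩ := h
  set s := ∑ j : Fin m, x j.succ
  set P := ({p | x p.succ ≠ 0} : Finset (Fin m))
  refine ⟨P.card, (Finset.card_filter_le _ _).trans (by simp), ?_⟩
  have hpend : ∀ p ∈ P, (μ + 2) * x p.succ = x 0 + 2 * s := by
    intro p hp
    have := hx.mulVec_eq (Finset.mem_filter.1 hp).2
    rw [distMatrix_starGraph_mulVec_succ] at this
    linarith
  have hsum : (μ + 2) * s = P.card * (x 0 + 2 * s) := by
    calc (μ + 2) * s = ∑ p ∈ P, (μ + 2) * x p.succ := by
          rw [← Finset.mul_sum, Finset.sum_filter_ne_zero]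
      _ = ∑ p ∈ P, (x 0 + 2 * s) := Finset.sum_congr rfl hpend
      _ = P.card * (x 0 + 2 * s) := by rw [Finset.sum_const, nsmul_eq_mul]
  by_cases hx0 : x 0 = 0
  · have hs : s ≠ 0 := by
      intro hs
      have hleaves := (Finset.sum_eq_zero_iff_of_nonneg fun j _ => hx.2.1 j.succ).1 hs
      exact hx.1 (funext fun i => Fin.cases hx0 (fun j => hleaves j (Finset.mem_univ j)) i)
    left
    rw [hx0] at hsum
    linarith [mul_right_cancel₀ hs (hsum.trans (by ring) : (μ + 2) * s = (2 * P.card) * s)]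
  · right
    have hcenter : μ * x 0 = s := by
      rw [← hx.mulVec_eq hx0, distMatrix_starGraph_mulVec_zero]
    have : (μ ^ 2 - 2 * (P.card - 1) * μ - P.card) * x 0 = 0 := by
      linear_combination hsum + (μ + 2 - 2 * P.card) * hcenter
    linarith [(mul_eq_zero.1 this).resolve_right hx0]

theorem two_mul_sub_two_mem_distParetoSet_starGraph (hm : m ≠ 0) :
    2 * (m : ℝ) - 2 ∈ distParetoSet (starGraph (m + 1)) := by
  set x : Fin (m + 1) → ℝ := Fin.cons 0 fun _ => 1
  have hs : ∑ j : Fin m, x j.succ = m := by simp [x]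
  have hpend : ∀ p : Fin m,
      (distMatrix (starGraph (m + 1)) *ᵥ x) p.succ = (2 * m - 2) * x p.succ := by
    intro p
    rw [distMatrix_starGraph_mulVec_succ, hs]
    simp only [x, Fin.cons_zero, Fin.cons_succ]
    ring
  refine ⟨x, isParetoEigenpair_of_mulVec_eq ?_ ?_ ?_ ?_⟩
  · exact Function.ne_iff.2 ⟨Fin.succ ⟨0, Nat.pos_of_ne_zero hm⟩, one_ne_zero⟩
  · exact Fin.cases le_rfl fun _ => zero_le_one
  · refine Fin.cases ?_ fun p => (hpend p).ge
    rw [distMatrix_starGraph_mulVec_zero, hs]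
    simp [x]
  · exact Fin.cases (fun h => absurd rfl h) fun p _ => hpend p

/-- The largest root of `μ ^ 2 = 2 * (m - 1) * μ + m`: the spectral radius of the distance matrix
of the star with `m` leaves. -/
noncomputable def starPerronRoot (m : ℕ) : ℝ :=
  (m - 1 : ℝ) + √((m : ℝ) ^ 2 - m + 1)

theorem sq_sqrt_sq_sub_self_add_one (x : ℝ) : √(x ^ 2 - x + 1) ^ 2 = x ^ 2 - x + 1 :=
  Real.sq_sqrt (by nlinarith [sq_nonneg (x - 1)])

theorem sub_one_lt_sqrt_sq_sub_self_add_one {x : ℝ} (hx : 0 ≤ x) : x - 1 < √(x ^ 2 - x + 1) := by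
  nlinarith [sq_sqrt_sq_sub_self_add_one x, Real.sqrt_nonneg (x ^ 2 - x + 1)]

theorem starPerronRoot_mem_distParetoSet_starGraph :
    starPerronRoot m ∈ distParetoSet (starGraph (m + 1)) := by
  set r := √((m : ℝ) ^ 2 - m + 1)
  have hr := sub_one_lt_sqrt_sq_sub_self_add_one m.cast_nonneg
  set x : Fin (m + 1) → ℝ := Fin.cons (r - (m - 1)) fun _ => 1
  have hs : ∑ j : Fin m, x j.succ = m := by simp [x]
  have heig : ∀ i, (distMatrix (starGraph (m + 1)) *ᵥ x) i = starPerronRoot m * x i := by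
    refine Fin.cases ?_ fun p => ?_
    · rw [distMatrix_starGraph_mulVec_zero, hs]
      simp only [x, Fin.cons_zero, starPerronRoot]
      linear_combination -sq_sqrt_sq_sub_self_add_one (m : ℝ)
    · rw [distMatrix_starGraph_mulVec_succ, hs]
      simp only [x, Fin.cons_zero, Fin.cons_succ, starPerronRoot]
      ring
  refine ⟨x, isParetoEigenpair_of_mulVec_eq ?_ ?_ (fun i => (heig i).ge) fun i _ => heig i⟩
  · exact Function.ne_iff.2 ⟨0, (sub_pos.2 hr).ne'⟩
  · exact Fin.cases (sub_pos.2 hr).le fun _ => zero_le_one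

theorem two_mul_sub_two_lt_starPerronRoot : 2 * (m : ℝ) - 2 < starPerronRoot m := by
  rw [starPerronRoot]
  linarith [sub_one_lt_sqrt_sq_sub_self_add_one m.cast_nonneg]

theorem le_or_eq_starPerronRoot_of_mem_distParetoSet {μ : ℝ}
    (h : μ ∈ distParetoSet (starGraph (m + 1))) : μ ≤ 2 * m - 2 ∨ μ = starPerronRoot m := by
  rw [or_iff_not_imp_left, not_le]
  intro hμ
  obtain ⟨k, hk, hk' | hk'⟩ := starGraph_paretoEigenvalue_cases h
  · have : (k : ℝ) ≤ m := by exact_mod_cast hk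
    linarith
  obtain rfl : k = m := by
    by_contra hne
    have : (k : ℝ) + 1 ≤ m := by exact_mod_cast Nat.lt_of_le_of_ne hk hne
    nlinarith
  have : (μ - starPerronRoot k) * (μ - (k - 1 - √((k : ℝ) ^ 2 - k + 1))) = 0 := by
    rw [starPerronRoot]
    linear_combination hk' - sq_sqrt_sq_sub_self_add_one (k : ℝ)
  refine sub_eq_zero.1 ((mul_eq_zero.1 this).resolve_right fun h' => ?_)
  have : (k : ℝ) ≤ k ^ 2 := by exact_mod_cast Nat.le_self_pow two_ne_zero k
  linarith [Real.one_le_sqrt.2 (by linarith : (1 : ℝ) ≤ k ^ 2 - k + 1)]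

end Star

theorem stmt7 (n : ℕ) (hn : 2 ≤ n) (ρ1 ρ2 : ℝ)
    (hρ1 : IsKthLargest (distParetoSet (starGraph n)) 1 ρ1)
    (hρ2 : IsKthLargest (distParetoSet (starGraph n)) 2 ρ2) :
    ρ1 - ρ2 = Real.sqrt ((n : ℝ) ^ 2 - 3 * (n : ℝ) + 3) - (n : ℝ) + 2 := by
  obtain ⟨m, rfl⟩ : ∃ m, n = m + 1 := ⟨n - 1, by omega⟩
  obtain ⟨h1, h2⟩ := isKthLargest_one_two_of_le_or_eq
    (starPerronRoot_mem_distParetoSet_starGraph (m := m))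
    (two_mul_sub_two_mem_distParetoSet_starGraph (by omega)) two_mul_sub_two_lt_starPerronRoot
    fun _ => le_or_eq_starPerronRoot_of_mem_distParetoSet
  have hfin := finite_setOf_isParetoEigenvalue (distMatrix (starGraph (m + 1)))
  rw [hρ1.unique hfin h1, hρ2.unique hfin h2, starPerronRoot]
  push_cast
  ring_nf
end

section
/- Let G be a connected graph on n ≥ 3 vertices and let x be the unit positive Perron eigenvector of the distance matrix D(G), so that D(G)x = ρ₁(G)x. Then for any vertex v with 2x_v² < 1, ρ₁(G)/ρ₂(G) ≤ (1 − x_v²)/(1 − 2x_v²), and equality holds if and only if x_u = d(u,v)/√((ρ₁(G) − ρ₂(G))(2ρ₁(G) − ρ₂(G))) for all vertices u ≠ v. -/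
open Matrix SimpleGraph

/-!
Write `t = x_v²` and let `w` be `x` with its `v`-coordinate set to `0`; since `d(v,v) = 0`,
`wᵀDw = ρ₁(1 - 2t)` and `‖w‖² = 1 - t`. On the cone of nonnegative vectors vanishing at `v`
the Rayleigh quotient of `D` attains a maximum `μ` at some `y`, and the first-order conditions
make `y` a Pareto eigenvector. Pairing with the Perron vector shows that every Pareto eigenvalue
is at most `ρ₁`, with equality only for eigenvectors; as row `v` of `D` is positive off the
diagonal, `y` is not one, so `μ < ρ₁` and hence `μ ≤ ρ₂`. Thus `ρ₁(1 - 2t) ≤ ρ₂(1 - t)`.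

In the equality case `w` is itself a maximizer, so `(D w)_u = ρ₂ x_u` for `u ≠ v`, that is
`(ρ₁ - ρ₂) x_u = x_v d(u,v)`. Conversely, the formula for `x_u` turns row `v` of `D x = ρ₁ x`
and `‖x‖ = 1` into a quadratic equation for `t` whose only root below `1` is the equality case.
-/

open Filter Topology

def vanishingCone {ι : Type*} (v : ι) : Set (ι → ℝ) := {z | 0 ≤ z ∧ z v = 0}

theorem update_zero_eq_add_single {ι : Type*} [DecidableEq ι] (x : ι → ℝ) (v : ι) :
    Function.update x v 0 = x + Pi.single v (-x v) := by
  ext i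
  rcases eq_or_ne i v with rfl | hi <;> simp [*]

theorem update_zero_mem_vanishingCone {ι : Type*} [DecidableEq ι] {x : ι → ℝ} (hx : 0 ≤ x)
    (v : ι) : Function.update x v 0 ∈ vanishingCone v :=
  ⟨le_update_iff.mpr ⟨le_rfl, fun j _ => hx j⟩, Function.update_self v 0 x⟩

theorem exists_ne_of_sq_lt_dotProduct_self {ι : Type*} [Fintype ι] {x : ι → ℝ} {v : ι}
    (h : x v ^ 2 < x ⬝ᵥ x) : ∃ u, u ≠ v := by
  by_contra! hv
  rw [dotProduct, Fintype.sum_eq_single v fun u hu => (hu (hv u)).elim, sq] at h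
  exact lt_irrefl _ h

theorem eq_zero_of_eventually_quadratic_nonpos {a b : ℝ}
    (h : ∀ᶠ s in 𝓝 (0 : ℝ), 2 * s * a + s ^ 2 * b ≤ 0) : a = 0 := by
  have hmax : IsLocalMax (fun s : ℝ => 2 * s * a + s ^ 2 * b) 0 := by
    simpa [IsLocalMax, IsMaxFilter] using h
  have hderiv : HasDerivAt (fun s : ℝ => 2 * s * a + s ^ 2 * b) (2 * a) 0 := by
    simpa using (((hasDerivAt_id (0 : ℝ)).const_mul 2).mul_const a).fun_add
      ((hasDerivAt_pow 2 (0 : ℝ)).mul_const b)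
  linarith [hmax.hasDerivAt_eq_zero hderiv]

theorem mul_sqrt_eq_sub_of_mul_eq {a ρ l : ℝ} (ha : 0 < a) (hl : l ≤ ρ)
    (h : ρ * (1 - 2 * a ^ 2) = l * (1 - a ^ 2)) :
    a * √((ρ - l) * (2 * ρ - l)) = ρ - l := by
  have hsq : a ^ 2 * ((ρ - l) * (2 * ρ - l)) = (ρ - l) ^ 2 := by
    linear_combination -(ρ - l) * h
  calc a * √((ρ - l) * (2 * ρ - l)) = √(a ^ 2 * ((ρ - l) * (2 * ρ - l))) := by
        rw [Real.sqrt_mul (sq_nonneg a), Real.sqrt_sq ha.le]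
    _ = ρ - l := by rw [hsq, Real.sqrt_sq (sub_nonneg.mpr hl)]

theorem mul_eq_of_mul_eq_sqrt_mul {a ρ l : ℝ} (hρ : 0 < ρ) (hl : l < ρ) (ha : a ^ 2 < 1)
    (h : ρ * a = √((ρ - l) * (2 * ρ - l)) * (1 - a ^ 2)) :
    ρ * (1 - 2 * a ^ 2) = l * (1 - a ^ 2) := by
  have hsq : ρ ^ 2 * a ^ 2 = (ρ - l) * (2 * ρ - l) * (1 - a ^ 2) ^ 2 := by
    rw [← mul_pow, h, mul_pow, Real.sq_sqrt (by nlinarith)]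
  -- the roots of this quadratic in `a ^ 2` are `(ρ - l) / (2ρ - l) < 1` and its inverse
  have hroots : ((2 * ρ - l) * a ^ 2 - (ρ - l)) * ((ρ - l) * a ^ 2 - (2 * ρ - l)) = 0 := by
    linear_combination -hsq
  have hbig : (ρ - l) * a ^ 2 - (2 * ρ - l) < 0 := by nlinarith
  linear_combination -(mul_eq_zero.mp hroots).resolve_right hbig.ne

theorem IsKthLargest.lt_and_le_of_isGreatest {S : Set ℝ} {a b : ℝ} (ha : IsGreatest S a)
    (hb : IsKthLargest S 2 b) : b < a ∧ ∀ c ∈ S, c < a → c ≤ b := by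
  obtain ⟨d, hd⟩ := Set.ncard_eq_one.mp hb.2
  have hmem : ∀ c ∈ S, b < c → c = d := fun c hc hbc => by
    simpa [hd] using (show c ∈ {x ∈ S | b < x} from ⟨hc, hbc⟩)
  have hd' : d ∈ {x ∈ S | b < x} := by rw [hd]; rfl
  have hba : b < a := hd'.2.trans_le (ha.2 hd'.1)
  exact ⟨hba, fun c hc hca => not_lt.mp fun hbc =>
    hca.ne ((hmem c hc hbc).trans (hmem a ha.1 hba).symm)⟩

namespace Matrix

variable {ι : Type*} [Fintype ι]

def IsRayleighBound (D : Matrix ι ι ℝ) (K : Set (ι → ℝ)) (μ : ℝ) : Prop :=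
  ∀ z ∈ K, z ⬝ᵥ D *ᵥ z ≤ μ * (z ⬝ᵥ z)

theorem IsRayleighBound.mono {D : Matrix ι ι ℝ} {K : Set (ι → ℝ)} {μ μ' : ℝ}
    (h : D.IsRayleighBound K μ) (hμ : μ ≤ μ') : D.IsRayleighBound K μ' := fun z hz =>
  (h z hz).trans (mul_le_mul_of_nonneg_right hμ
    (Finset.sum_nonneg fun i _ => mul_self_nonneg (z i)))

theorem IsSymm.dotProduct_mulVec_comm {D : Matrix ι ι ℝ} (hD : D.IsSymm) (a b : ι → ℝ) :
    a ⬝ᵥ D *ᵥ b = b ⬝ᵥ D *ᵥ a := by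
  rw [dotProduct_mulVec, dotProduct_comm, ← mulVec_transpose, hD.eq]

theorem mulVec_apply_pos {D : Matrix ι ι ℝ} {y : ι → ℝ} {i j : ι} (hD : ∀ k, 0 ≤ D i k)
    (hy : 0 ≤ y) (hDij : 0 < D i j) (hyj : 0 < y j) : 0 < (D *ᵥ y) i :=
  Finset.sum_pos' (fun k _ => mul_nonneg (hD k) (hy k)) ⟨j, Finset.mem_univ j, mul_pos hDij hyj⟩

theorem pos_of_mulVec_eq_smul {D : Matrix ι ι ℝ} {x : ι → ℝ} {ρ : ℝ} {i j : ι}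
    (hD : ∀ k, 0 ≤ D i k) (hDij : 0 < D i j) (hxpos : ∀ k, 0 < x k) (hx : D *ᵥ x = ρ • x) :
    0 < ρ := by
  have h := mulVec_apply_pos hD (fun k => (hxpos k).le) hDij (hxpos j)
  rw [hx, Pi.smul_apply, smul_eq_mul] at h
  exact pos_of_mul_pos_left h (hxpos i).le

section Perron

variable {D : Matrix ι ι ℝ} {x y : ι → ℝ} {ρ lam : ℝ}

theorem IsSymm.dotProduct_mulVec_sub_smul (hD : D.IsSymm) (hx : D *ᵥ x = ρ • x) (lam : ℝ)
    (y : ι → ℝ) : x ⬝ᵥ (D *ᵥ y - lam • y) = (ρ - lam) * (x ⬝ᵥ y) := by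
  rw [dotProduct_sub, hD.dotProduct_mulVec_comm, hx, dotProduct_smul, dotProduct_smul,
    dotProduct_comm y, smul_eq_mul, smul_eq_mul, sub_mul]

theorem IsSymm.le_of_smul_le_mulVec (hD : D.IsSymm) (hx : D *ᵥ x = ρ • x)
    (hxpos : ∀ i, 0 < x i) (hy : 0 ≤ y) (hy0 : y ≠ 0) (hlam : ∀ i, lam * y i ≤ (D *ᵥ y) i) :
    lam ≤ ρ := by
  obtain ⟨j, hj⟩ := Function.ne_iff.mp hy0
  have hxy : 0 < x ⬝ᵥ y := Finset.sum_pos' (fun i _ => mul_nonneg (hxpos i).le (hy i))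
    ⟨j, Finset.mem_univ j, mul_pos (hxpos j) ((hy j).lt_of_ne' hj)⟩
  have h : 0 ≤ x ⬝ᵥ (D *ᵥ y - lam • y) :=
    dotProduct_nonneg_of_nonneg (fun i => (hxpos i).le) fun i => sub_nonneg.mpr (hlam i)
  rw [hD.dotProduct_mulVec_sub_smul hx] at h
  exact sub_nonneg.mp (nonneg_of_mul_nonneg_left h hxy)

theorem IsSymm.mulVec_eq_smul_of_smul_le_mulVec (hD : D.IsSymm) (hx : D *ᵥ x = ρ • x)
    (hxpos : ∀ i, 0 < x i) (hy : ∀ i, ρ * y i ≤ (D *ᵥ y) i) : D *ᵥ y = ρ • y := by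
  have hsum := hD.dotProduct_mulVec_sub_smul hx ρ y
  rw [sub_self, zero_mul] at hsum
  have hterms := (Finset.sum_eq_zero_iff_of_nonneg fun i _ =>
    mul_nonneg (hxpos i).le (sub_nonneg.mpr (hy i))).mp hsum
  funext i
  have hi := hterms i (Finset.mem_univ i)
  rw [mul_eq_zero, or_iff_right (hxpos i).ne'] at hi
  exact sub_eq_zero.mp hi

end Perron

section Perturbation

variable [DecidableEq ι] {D : Matrix ι ι ℝ}

theorem IsSymm.dotProduct_mulVec_add_single (hD : D.IsSymm) (w : ι → ℝ) (u : ι) (s : ℝ) :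
    (w + Pi.single u s) ⬝ᵥ D *ᵥ (w + Pi.single u s) =
      w ⬝ᵥ D *ᵥ w + 2 * s * (D *ᵥ w) u + s ^ 2 * D u u := by
  rw [mulVec_add, dotProduct_add, add_dotProduct, add_dotProduct,
    hD.dotProduct_mulVec_comm w (Pi.single u s), single_dotProduct, single_dotProduct,
    mulVec_single]
  simp only [Pi.smul_apply, col_apply, MulOpposite.smul_eq_mul_unop, MulOpposite.unop_op]
  ring

theorem dotProduct_self_add_single (w : ι → ℝ) (u : ι) (s : ℝ) :
    (w + Pi.single u s) ⬝ᵥ (w + Pi.single u s) = w ⬝ᵥ w + 2 * s * w u + s ^ 2 := by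
  rw [dotProduct_add, add_dotProduct, add_dotProduct, single_dotProduct, single_dotProduct,
    dotProduct_single, Pi.single_eq_same]
  ring

theorem mulVec_update_zero_apply (x : ι → ℝ) (v i : ι) :
    (D *ᵥ Function.update x v 0) i = (D *ᵥ x) i - D i v * x v := by
  rw [update_zero_eq_add_single, mulVec_add, mulVec_single]
  simp only [Pi.add_apply, Pi.smul_apply, col_apply, MulOpposite.smul_eq_mul_unop,
    MulOpposite.unop_op]
  ring

theorem IsSymm.dotProduct_mulVec_update_zero (hD : D.IsSymm) (x : ι → ℝ) (v : ι) :
    Function.update x v 0 ⬝ᵥ D *ᵥ Function.update x v 0 =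
      x ⬝ᵥ D *ᵥ x - 2 * x v * (D *ᵥ x) v + x v ^ 2 * D v v := by
  rw [update_zero_eq_add_single, hD.dotProduct_mulVec_add_single]
  ring

theorem dotProduct_self_update_zero (x : ι → ℝ) (v : ι) :
    Function.update x v 0 ⬝ᵥ Function.update x v 0 = x ⬝ᵥ x - x v ^ 2 := by
  rw [update_zero_eq_add_single, dotProduct_self_add_single]
  ring

end Perturbation

section RayleighMax

variable {D : Matrix ι ι ℝ} {v : ι}

theorem IsSymm.mulVec_apply_eq_of_isRayleighBound [DecidableEq ι] (hD : D.IsSymm) {μ : ℝ}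
    (hμ : D.IsRayleighBound (vanishingCone v) μ) {w : ι → ℝ} (hw : w ∈ vanishingCone v)
    (hwμ : w ⬝ᵥ D *ᵥ w = μ * (w ⬝ᵥ w)) {u : ι} (huv : u ≠ v) (hwu : 0 < w u) :
    (D *ᵥ w) u = μ * w u := by
  suffices (D *ᵥ w) u - μ * w u = 0 by linarith
  refine eq_zero_of_eventually_quadratic_nonpos (b := D u u - μ) ?_
  filter_upwards [Ioo_mem_nhds (neg_neg_of_pos hwu) hwu] with s hs
  have hmem : w + Pi.single u s ∈ vanishingCone v := by
    refine ⟨fun i => ?_, by simp [hw.2, huv.symm]⟩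
    rcases eq_or_ne i u with rfl | hi
    · simp only [Pi.add_apply, Pi.single_eq_same, Pi.zero_apply]
      linarith [hs.1]
    · simpa [hi] using hw.1 i
  have h := hμ _ hmem
  rw [hD.dotProduct_mulVec_add_single, dotProduct_self_add_single, hwμ] at h
  linarith

theorem isRayleighBound_vanishingCone_of_forall_unit {M : ℝ}
    (hM : ∀ y ∈ vanishingCone v, y ⬝ᵥ y = 1 → y ⬝ᵥ D *ᵥ y ≤ M) :
    D.IsRayleighBound (vanishingCone v) M := by
  intro z hz
  rcases eq_or_ne z 0 with rfl | hz0
  · simp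
  have hN : 0 < z ⬝ᵥ z := lt_of_le_of_ne (dotProduct_nonneg_of_nonneg hz.1 hz.1)
    (Ne.symm (dotProduct_self_eq_zero.not.mpr hz0))
  set c := (√(z ⬝ᵥ z))⁻¹
  have hc : c ^ 2 * (z ⬝ᵥ z) = 1 := by
    rw [inv_pow, Real.sq_sqrt hN.le, inv_mul_cancel₀ hN.ne']
  have hcz : c • z ∈ vanishingCone v :=
    ⟨smul_nonneg (by positivity) hz.1, by simp [hz.2]⟩
  have h := hM _ hcz (by rw [smul_dotProduct, dotProduct_smul, smul_eq_mul, smul_eq_mul,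
    ← mul_assoc, ← sq, hc])
  rw [mulVec_smul, smul_dotProduct, dotProduct_smul, smul_eq_mul, smul_eq_mul, ← mul_assoc,
    ← sq] at h
  calc z ⬝ᵥ D *ᵥ z = (c ^ 2 * (z ⬝ᵥ D *ᵥ z)) * (z ⬝ᵥ z) := by
        rw [mul_comm (c ^ 2), mul_assoc, hc, mul_one]
    _ ≤ M * (z ⬝ᵥ z) := mul_le_mul_of_nonneg_right h hN.le

theorem isCompact_vanishingCone_inter_unit (v : ι) :
    IsCompact (vanishingCone v ∩ {y : ι → ℝ | y ⬝ᵥ y = 1}) := by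
  refine (isCompact_Icc (a := (0 : ι → ℝ)) (b := 1)).of_isClosed_subset ?_ ?_
  · exact ((isClosed_le continuous_const continuous_id).inter
      (isClosed_eq (continuous_apply v) continuous_const)).inter
      (isClosed_eq (continuous_id.dotProduct continuous_id) continuous_const)
  · rintro y ⟨⟨hy0, -⟩, hy1 : y ⬝ᵥ y = 1⟩
    refine ⟨hy0, fun i => ?_⟩
    have : y i * y i ≤ y ⬝ᵥ y :=
      Finset.single_le_sum (fun j _ => mul_self_nonneg (y j)) (Finset.mem_univ i)
    show y i ≤ 1
    nlinarith [hy0 i]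

theorem exists_isRayleighBound_vanishingCone [DecidableEq ι] (D : Matrix ι ι ℝ) {u v : ι}
    (huv : u ≠ v) : ∃ y ∈ vanishingCone v, y ⬝ᵥ y = 1 ∧
      D.IsRayleighBound (vanishingCone v) (y ⬝ᵥ D *ᵥ y) := by
  have hne : (vanishingCone v ∩ {y : ι → ℝ | y ⬝ᵥ y = 1}).Nonempty :=
    ⟨Pi.single u 1, ⟨Pi.single_nonneg.mpr zero_le_one, by simp [huv.symm]⟩, by simp⟩
  obtain ⟨y, ⟨hy, hy1⟩, hmax⟩ := (isCompact_vanishingCone_inter_unit v).exists_isMaxOn hne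
    (continuous_id.dotProduct (continuous_const.matrix_mulVec continuous_id)).continuousOn
  exact ⟨y, hy, hy1, isRayleighBound_vanishingCone_of_forall_unit fun z hz hz1 =>
    hmax ⟨hz, hz1⟩⟩

end RayleighMax

section Pareto

variable {n : ℕ} {D : Matrix (Fin n) (Fin n) ℝ} {v : Fin n}

theorem IsSymm.isParetoEigenpair_of_isRayleighBound (hD : D.IsSymm) (hD0 : ∀ i j, 0 ≤ D i j)
    {y : Fin n → ℝ} (hy : y ∈ vanishingCone v) (hy1 : y ⬝ᵥ y = 1)
    (hmax : D.IsRayleighBound (vanishingCone v) (y ⬝ᵥ D *ᵥ y)) :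
    IsParetoEigenpair D (y ⬝ᵥ D *ᵥ y) y := by
  refine ⟨fun h => by simp [h] at hy1, hy.1, fun i => ?_, by rw [hy1, div_one]⟩
  rcases (show 0 ≤ y i from hy.1 i).eq_or_lt with hi | hi
  · rw [← hi, mul_zero]
    exact dotProduct_nonneg_of_nonneg (fun j => hD0 i j) hy.1
  · have hiv : i ≠ v := fun h => hi.ne' (h ▸ hy.2)
    exact (hD.mulVec_apply_eq_of_isRayleighBound hmax hy (by rw [hy1, mul_one]) hiv hi).ge

theorem IsSymm.exists_paretoEigenvalue_lt (hD : D.IsSymm) (hD0 : ∀ i j, 0 ≤ D i j)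
    (hDv : ∀ j, j ≠ v → 0 < D v j) {x : Fin n → ℝ} {ρ : ℝ} (hxpos : ∀ i, 0 < x i)
    (hx : D *ᵥ x = ρ • x) {u : Fin n} (huv : u ≠ v) :
    ∃ μ, IsParetoEigenvalue D μ ∧ μ < ρ ∧ D.IsRayleighBound (vanishingCone v) μ := by
  obtain ⟨y, hy, hy1, hmax⟩ := exists_isRayleighBound_vanishingCone D huv
  have hpair := hD.isParetoEigenpair_of_isRayleighBound hD0 hy hy1 hmax
  refine ⟨_, ⟨y, hpair⟩, lt_of_le_of_ne (hD.le_of_smul_le_mulVec hx hxpos hy.1 hpair.1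
    hpair.2.2.1) fun hρ => ?_, hmax⟩
  -- for `μ = ρ`, `y` would be an eigenvector vanishing at `v`, yet `(D y)_v > 0`
  obtain ⟨j, hj⟩ := Function.ne_iff.mp hpair.1
  have hjv : j ≠ v := fun h => hj (h ▸ hy.2)
  have hpos := mulVec_apply_pos (hD0 v) hy.1 (hDv j hjv) ((hy.1 j).lt_of_ne' hj)
  rw [hD.mulVec_eq_smul_of_smul_le_mulVec hx hxpos (hρ ▸ hpair.2.2.1), Pi.smul_apply, hy.2,
    smul_zero] at hpos
  exact lt_irrefl 0 hpos

end Pareto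

section RatioBound

variable [DecidableEq ι] {D : Matrix ι ι ℝ} {x : ι → ℝ} {v : ι} {ρ l : ℝ}

theorem IsSymm.dotProduct_mulVec_update_zero_of_eigen (hD : D.IsSymm) (hdiag : D v v = 0)
    (hx : D *ᵥ x = ρ • x) (hunit : x ⬝ᵥ x = 1) :
    Function.update x v 0 ⬝ᵥ D *ᵥ Function.update x v 0 = ρ * (1 - 2 * x v ^ 2) := by
  rw [hD.dotProduct_mulVec_update_zero, hx, dotProduct_smul, hunit, hdiag, Pi.smul_apply,
    smul_eq_mul, smul_eq_mul]
  ring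

theorem IsSymm.mul_one_sub_two_sq_le (hD : D.IsSymm) (hdiag : D v v = 0) (hx0 : 0 ≤ x)
    (hx : D *ᵥ x = ρ • x) (hunit : x ⬝ᵥ x = 1) (hl : D.IsRayleighBound (vanishingCone v) l) :
    ρ * (1 - 2 * x v ^ 2) ≤ l * (1 - x v ^ 2) := by
  have h := hl _ (update_zero_mem_vanishingCone hx0 v)
  rwa [hD.dotProduct_mulVec_update_zero_of_eigen hdiag hx hunit, dotProduct_self_update_zero,
    hunit] at h

theorem IsSymm.mul_sqrt_eq_of_mul_one_sub_eq (hD : D.IsSymm) (hdiag : D v v = 0)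
    (hxpos : ∀ i, 0 < x i) (hx : D *ᵥ x = ρ • x) (hunit : x ⬝ᵥ x = 1)
    (hl : D.IsRayleighBound (vanishingCone v) l) (hlρ : l ≤ ρ)
    (heq : ρ * (1 - 2 * x v ^ 2) = l * (1 - x v ^ 2)) {u : ι} (huv : u ≠ v) :
    x u * √((ρ - l) * (2 * ρ - l)) = D u v := by
  have hwu : Function.update x v 0 u = x u := Function.update_of_ne huv _ _
  have hfirst := hD.mulVec_apply_eq_of_isRayleighBound hl
    (update_zero_mem_vanishingCone (fun i => (hxpos i).le) v)
    (by rw [hD.dotProduct_mulVec_update_zero_of_eigen hdiag hx hunit,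
      dotProduct_self_update_zero, hunit, heq]) huv (hwu ▸ hxpos u)
  rw [mulVec_update_zero_apply, hx, Pi.smul_apply, smul_eq_mul, hwu] at hfirst
  have hsqrt := mul_sqrt_eq_sub_of_mul_eq (hxpos v) hlρ heq
  apply mul_left_cancel₀ (hxpos v).ne'
  linear_combination x u * hsqrt + hfirst

theorem IsSymm.mul_one_sub_eq_of_mul_sqrt_eq (hD : D.IsSymm) (hdiag : D v v = 0)
    (hx : D *ᵥ x = ρ • x) (hunit : x ⬝ᵥ x = 1) (hρ : 0 < ρ) (hl : l < ρ) (hv : x v ^ 2 < 1)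
    (h : ∀ u, u ≠ v → x u * √((ρ - l) * (2 * ρ - l)) = D u v) :
    ρ * (1 - 2 * x v ^ 2) = l * (1 - x v ^ 2) := by
  set r := √((ρ - l) * (2 * ρ - l))
  set w := Function.update x v 0
  have hwr : ∀ j, w j * r = D v j := by
    intro j
    rcases eq_or_ne j v with rfl | hj
    · simp [w, hdiag]
    · rw [show w j = x j from Function.update_of_ne hj _ _, h j hj, hD.apply v j]
  have hrow : ρ * x v * r = r ^ 2 * (1 - x v ^ 2) :=
    calc ρ * x v * r = (D *ᵥ w) v * r := by
          rw [mulVec_update_zero_apply, hdiag, hx, Pi.smul_apply, smul_eq_mul, zero_mul,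
            sub_zero]
      _ = ∑ j, w j * r * (w j * r) := by
          simp only [mulVec, dotProduct, Finset.sum_mul, ← hwr]
          exact Finset.sum_congr rfl fun j _ => by ring
      _ = r ^ 2 * (w ⬝ᵥ w) := by
          simp only [dotProduct, Finset.mul_sum]
          exact Finset.sum_congr rfl fun j _ => by ring
      _ = r ^ 2 * (1 - x v ^ 2) := by rw [dotProduct_self_update_zero, hunit]
  have hr : 0 < r := Real.sqrt_pos.mpr (by nlinarith)
  exact mul_eq_of_mul_eq_sqrt_mul hρ hl hv
    (mul_right_cancel₀ hr.ne' (by linear_combination hrow))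

end RatioBound

end Matrix

theorem distMatrix_isSymm {n : ℕ} (G : SimpleGraph (Fin n)) : (distMatrix G).IsSymm :=
  IsSymm.ext fun i j => by simp [distMatrix, SimpleGraph.dist_comm]

theorem distMatrix_apply_self {n : ℕ} (G : SimpleGraph (Fin n)) (i : Fin n) :
    distMatrix G i i = 0 := by
  simp [distMatrix]

theorem distMatrix_nonneg {n : ℕ} (G : SimpleGraph (Fin n)) (i j : Fin n) :
    0 ≤ distMatrix G i j :=
  Nat.cast_nonneg _

theorem SimpleGraph.Connected.distMatrix_pos {n : ℕ} {G : SimpleGraph (Fin n)}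
    (hG : G.Connected) {i j : Fin n} (hij : i ≠ j) : 0 < distMatrix G i j :=
  Nat.cast_pos.mpr (hG.pos_dist_of_ne hij)

theorem stmt9_general (n : ℕ) (G : SimpleGraph (Fin n)) (hG : G.Connected)
    (ρ1 ρ2 : ℝ)
    (hρ1 : IsKthLargest (distParetoSet G) 1 ρ1)
    (hρ2 : IsKthLargest (distParetoSet G) 2 ρ2)
    (x : Fin n → ℝ) (hpos : ∀ i, 0 < x i) (hunit : x ⬝ᵥ x = 1)
    (heig : (distMatrix G).mulVec x = ρ1 • x)
    (v : Fin n) (hv : 2 * (x v) ^ 2 < 1) :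
    ρ1 / ρ2 ≤ (1 - (x v) ^ 2) / (1 - 2 * (x v) ^ 2) ∧
    (ρ1 / ρ2 = (1 - (x v) ^ 2) / (1 - 2 * (x v) ^ 2) ↔
      ∀ u : Fin n, u ≠ v →
        x u = (G.dist u v : ℝ) / Real.sqrt ((ρ1 - ρ2) * (2 * ρ1 - ρ2))) := by
  have hD := distMatrix_isSymm G
  have hdiag := distMatrix_apply_self G v
  obtain ⟨u, hu⟩ := exists_ne_of_sq_lt_dotProduct_self (x := x) (v := v) (by nlinarith)
  have hρ1pos := pos_of_mulVec_eq_smul (distMatrix_nonneg G v) (hG.distMatrix_pos hu.symm)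
    hpos heig
  obtain ⟨μ, hμ, hμρ1, hcone⟩ := hD.exists_paretoEigenvalue_lt (distMatrix_nonneg G)
    (fun j hj => hG.distMatrix_pos hj.symm) hpos heig hu
  obtain ⟨hρ21, hsecond⟩ := hρ2.lt_and_le_of_isGreatest
    ⟨hρ1.1, fun c ⟨y, hy⟩ => hD.le_of_smul_le_mulVec heig hpos hy.2.1 hy.1 hy.2.2.1⟩
  have hcone2 := hcone.mono (hsecond μ hμ hμρ1)
  have hle := hD.mul_one_sub_two_sq_le hdiag (fun i => (hpos i).le) heig hunit hcone2
  have hρ2pos : 0 < ρ2 := by nlinarith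
  have hsqrt : 0 < √((ρ1 - ρ2) * (2 * ρ1 - ρ2)) := Real.sqrt_pos.mpr (by nlinarith)
  rw [div_le_div_iff₀ hρ2pos (by linarith), div_eq_div_iff hρ2pos.ne' (by linarith),
    mul_comm (1 - x v ^ 2)]
  refine ⟨by linarith, fun heq u hu => ?_, fun h => ?_⟩
  · rw [eq_div_iff hsqrt.ne']
    exact hD.mul_sqrt_eq_of_mul_one_sub_eq hdiag hpos heig hunit hcone2 hρ21.le heq hu
  · refine hD.mul_one_sub_eq_of_mul_sqrt_eq hdiag heig hunit hρ1pos hρ21 (by linarith) ?_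
    intro u hu
    rw [h u hu, div_mul_cancel₀ _ hsqrt.ne']
    rfl

theorem stmt9 (n : ℕ) (hn : 3 ≤ n) (G : SimpleGraph (Fin n)) (hG : G.Connected)
    (ρ1 ρ2 : ℝ)
    (hρ1 : IsKthLargest (distParetoSet G) 1 ρ1)
    (hρ2 : IsKthLargest (distParetoSet G) 2 ρ2)
    (x : Fin n → ℝ) (hpos : ∀ i, 0 < x i) (hunit : x ⬝ᵥ x = 1)
    (heig : (distMatrix G).mulVec x = ρ1 • x)
    (v : Fin n) (hv : 2 * (x v) ^ 2 < 1) :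
    ρ1 / ρ2 ≤ (1 - (x v) ^ 2) / (1 - 2 * (x v) ^ 2) ∧
    (ρ1 / ρ2 = (1 - (x v) ^ 2) / (1 - 2 * (x v) ^ 2) ↔
      ∀ u : Fin n, u ≠ v →
        x u = (G.dist u v : ℝ) / Real.sqrt ((ρ1 - ρ2) * (2 * ρ1 - ρ2))) :=
  stmt9_general n G hG ρ1 ρ2 hρ1 hρ2 x hpos hunit heig v hv
end
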